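/- arXiv:1609.09052 — 6 statements merged into one kernel-verified Lean document; each statement's English description precedes it below -/
import Mathlib

section
/- Combes–Thomas bound: Let G be a finite simple graph with degrees bounded by d and normalized adjacency matrix H = A/√(d-1). Then for any z with |z| ≥ 2d - 1 and all vertices i, j, the Green's function satisfies |G_{ij}(z)| ≤ (d-1)^{-dist(i,j)/2}, where dist is graph distance. -/
/-!
Weight vertex `v` by `ρ v = (d - 1) ^ (dist(i, v) / 2)`. Along an edge `u ~ v` the distance to `i`
grows by at most one, so `ρ v / ρ u ≤ √(d - 1)`, which exactly cancels the normalization of `H`: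
every column of `diag(ρ)⁻¹ H diag(ρ)` has ℓ¹-norm at most `d`. If `y (H - z) = f`, then at a vertex
maximizing `‖y v‖ ρ v` the equation `z y v = ∑ u, y u H u v - f v` gives
`‖z‖ m ≤ d m + max ‖f v‖ ρ v` for the maximum `m`. Applied to row `i` of `(H - z)⁻¹`, where
`f = δ_i` and `ρ i = 1`, this yields `‖(H - z)⁻¹ i j‖ ρ j ≤ 1 / (‖z‖ - d) ≤ 1`.
-/

open Matrix

section WeightedMaximumPrinciple

variable {𝕜 V : Type*} [NormedField 𝕜] [Fintype V] [DecidableEq V]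
  {T : Matrix V V 𝕜} {ρ : V → ℝ} {c : ℝ} {z : 𝕜}

lemma norm_mul_weight_le_of_vecMul_sub_smul_one_eq (hρ : ∀ v, 0 < ρ v)
    (hT : ∀ v, ∑ u, ‖T u v‖ * (ρ v / ρ u) ≤ c) (hcz : c < ‖z‖)
    {y f : V → 𝕜} (hy : y ᵥ* (T - z • 1) = f) {F : ℝ} (hf : ∀ v, ‖f v‖ * ρ v ≤ F) (v : V) :
    ‖y v‖ * ρ v ≤ F / (‖z‖ - c) := by
  obtain ⟨w, -, hw⟩ :=
    Finset.univ.exists_max_image (fun v => ‖y v‖ * ρ v) ⟨v, Finset.mem_univ v⟩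
  have hm : ∀ u, ‖y u‖ * ρ u ≤ ‖y w‖ * ρ w := fun u => hw u (Finset.mem_univ u)
  have hm0 : 0 ≤ ‖y w‖ * ρ w := mul_nonneg (norm_nonneg _) (hρ w).le
  have hyw : z * y w = ∑ u, y u * T u w - f w := by
    rw [← hy, vecMul_sub, vecMul_smul, vecMul_one]
    simp [vecMul, dotProduct]
  have hmax : ‖z‖ * (‖y w‖ * ρ w) ≤ c * (‖y w‖ * ρ w) + F := calc
    ‖z‖ * (‖y w‖ * ρ w) = ‖∑ u, y u * T u w - f w‖ * ρ w := by rw [← hyw, norm_mul, mul_assoc]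
    _ ≤ (∑ u, ‖y u‖ * ‖T u w‖) * ρ w + ‖f w‖ * ρ w := by
        rw [← add_mul]
        refine mul_le_mul_of_nonneg_right ((norm_sub_le _ _).trans (add_le_add ?_ le_rfl)) (hρ w).le
        exact (norm_sum_le (E := 𝕜) _ _).trans_eq (by simp only [norm_mul])
    _ = ∑ u, ‖y u‖ * ρ u * (‖T u w‖ * (ρ w / ρ u)) + ‖f w‖ * ρ w := by
        rw [Finset.sum_mul]
        congr 1
        refine Finset.sum_congr rfl fun u _ => ?_
        field_simp [(hρ u).ne']
    _ ≤ ∑ u, ‖y w‖ * ρ w * (‖T u w‖ * (ρ w / ρ u)) + F := by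
        refine add_le_add (Finset.sum_le_sum fun u _ => ?_) (hf w)
        exact mul_le_mul_of_nonneg_right (hm u)
          (mul_nonneg (norm_nonneg _) (div_pos (hρ w) (hρ u)).le)
    _ ≤ c * (‖y w‖ * ρ w) + F := by
        rw [← Finset.mul_sum, mul_comm]
        gcongr
        exact hT w
  calc ‖y v‖ * ρ v ≤ ‖y w‖ * ρ w := hm v
    _ ≤ F / (‖z‖ - c) := by rw [le_div_iff₀ (sub_pos.2 hcz)]; linarith

lemma isUnit_det_sub_smul_one_of_weighted_colSum_le (hρ : ∀ v, 0 < ρ v)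
    (hT : ∀ v, ∑ u, ‖T u v‖ * (ρ v / ρ u) ≤ c) (hcz : c < ‖z‖) :
    IsUnit (T - z • 1).det := by
  rw [isUnit_iff_ne_zero, Ne, ← exists_vecMul_eq_zero_iff]
  rintro ⟨y, hy0, hy⟩
  refine hy0 (funext fun v => ?_)
  have hv := norm_mul_weight_le_of_vecMul_sub_smul_one_eq hρ hT hcz hy (F := 0) (by simp) v
  rw [zero_div] at hv
  exact norm_eq_zero.1 (le_antisymm (nonpos_of_mul_nonpos_left hv (hρ v)) (norm_nonneg _))

lemma norm_inv_sub_smul_one_apply_mul_weight_le (hρ : ∀ v, 0 < ρ v)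
    (hT : ∀ v, ∑ u, ‖T u v‖ * (ρ v / ρ u) ≤ c) (hcz : c < ‖z‖) (i j : V) :
    ‖(T - z • 1)⁻¹ i j‖ * ρ j ≤ ρ i / (‖z‖ - c) := by
  have hrow : (T - z • 1)⁻¹ i ᵥ* (T - z • 1) = Pi.single i 1 := by
    rw [← mul_apply_eq_vecMul,
      nonsing_inv_mul _ (isUnit_det_sub_smul_one_of_weighted_colSum_le hρ hT hcz)]
    ext v
    simp [one_apply, Pi.single_apply, eq_comm]
  refine norm_mul_weight_le_of_vecMul_sub_smul_one_eq hρ hT hcz hrow (fun v => ?_) j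
  by_cases hv : v = i
  · simp [hv]
  · simp [hv, (hρ i).le]

end WeightedMaximumPrinciple

namespace SimpleGraph

variable {V : Type*}

lemma Adj.dist_le_dist_add_one {G : SimpleGraph V} {u v : V} (h : G.Adj u v) (i : V) :
    G.dist i v ≤ G.dist i u + 1 := by
  simpa [dist_eq_one_iff_adj.2 h] using h.reachable.dist_triangle_right i

lemma rpow_dist_div_rpow_dist_le_sqrt {G : SimpleGraph V} {b : ℝ} (hb : 1 ≤ b) (i : V)
    {u v : V} (h : G.Adj u v) :
    b ^ ((G.dist i v : ℝ) / 2) / b ^ ((G.dist i u : ℝ) / 2) ≤ √b := by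
  have hdist : (G.dist i v : ℝ) ≤ G.dist i u + 1 := by exact_mod_cast h.dist_le_dist_add_one i
  rw [← Real.rpow_sub (by linarith), Real.sqrt_eq_rpow]
  exact Real.rpow_le_rpow_of_exponent_le hb (by linarith)

lemma sum_norm_smul_adjMatrix_mul_rpow_dist_le {𝕜 : Type*} [RCLike 𝕜] [Fintype V]
    (G : SimpleGraph V) [DecidableRel G.Adj] {b : ℝ} (hb : 1 ≤ b) (i v : V) :
    ∑ u, ‖(((√b : ℝ) : 𝕜)⁻¹ • G.adjMatrix 𝕜) u v‖ *
      (b ^ ((G.dist i v : ℝ) / 2) / b ^ ((G.dist i u : ℝ) / 2)) ≤ G.degree v := by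
  have hsqrt : 0 < √b := Real.sqrt_pos.2 (by linarith)
  have hterm : ∀ u, ‖(((√b : ℝ) : 𝕜)⁻¹ • G.adjMatrix 𝕜) u v‖ *
      (b ^ ((G.dist i v : ℝ) / 2) / b ^ ((G.dist i u : ℝ) / 2)) ≤ G.adjMatrix ℝ u v := by
    intro u
    by_cases h : G.Adj u v
    · simp only [Matrix.smul_apply, adjMatrix_apply, h, if_true, smul_eq_mul, mul_one, norm_inv,
        RCLike.norm_ofReal, abs_of_pos hsqrt]
      rw [inv_mul_le_iff₀ hsqrt, mul_one]
      exact rpow_dist_div_rpow_dist_le_sqrt hb i h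
    · simp [h]
  calc _ ≤ ∑ u, G.adjMatrix ℝ u v := Finset.sum_le_sum fun u _ => hterm u
    _ = G.degree v := by
      simpa [vecMul, dotProduct] using G.adjMatrix_vecMul_apply (α := ℝ) v 1

end SimpleGraph

/-- Combes–Thomas bound: for a finite simple graph with degrees bounded by `d` and
normalized adjacency matrix `H = A/√(d-1)`, the Green's function `G(z) = (H - z)⁻¹`
satisfies `|G_{ij}(z)| ≤ (d-1)^{-dist(i,j)/2}` whenever `|z| ≥ 2d - 1`. -/
theorem combes_thomas_bound {V : Type*} [Fintype V] [DecidableEq V]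
    (G : SimpleGraph V) [DecidableRel G.Adj] (d : ℕ) (hd : 2 ≤ d)
    (hdeg : ∀ v, G.degree v ≤ d)
    (z : ℂ) (hz : (2 * (d : ℝ) - 1) ≤ ‖z‖)
    (Gf : Matrix V V ℂ)
    (hGf : Gf = (((Real.sqrt ((d : ℝ) - 1) : ℂ))⁻¹ • (G.adjMatrix ℂ)
        - z • (1 : Matrix V V ℂ))⁻¹) :
    ∀ i j, ‖Gf i j‖ ≤ ((d : ℝ) - 1) ^ (-(G.dist i j : ℝ) / 2) := by
  intro i j
  have hb : (1 : ℝ) ≤ d - 1 := by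
    have : (2 : ℝ) ≤ d := by exact_mod_cast hd
    linarith
  set ρ : V → ℝ := fun v => ((d : ℝ) - 1) ^ ((G.dist i v : ℝ) / 2)
  have hρ : ∀ v, 0 < ρ v := fun v => Real.rpow_pos_of_pos (by linarith) _
  have hT (v : V) : ∑ u, ‖(((√((d : ℝ) - 1) : ℝ) : ℂ)⁻¹ • G.adjMatrix ℂ) u v‖ * (ρ v / ρ u) ≤ d :=
    (G.sum_norm_smul_adjMatrix_mul_rpow_dist_le hb i v).trans (by exact_mod_cast hdeg v)
  have hbound := norm_inv_sub_smul_one_apply_mul_weight_le hρ hT (by linarith) i j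
  have hρi : ρ i = 1 := by simp [ρ]
  have hdecay : ‖Gf i j‖ ≤ 1 / ρ j := by
    rw [le_div_iff₀ (hρ j), hGf]
    calc _ ≤ ρ i / (‖z‖ - d) := hbound
      _ ≤ 1 := by rw [hρi, div_le_one (by linarith)]; linarith
  rwa [neg_div, Real.rpow_neg (by linarith), ← one_div]
end

section
/- Let B be a ball (connected graph) with excess at most ω, let T be the subgraph induced on vertices within distance ℓ of the center, and let {a₁,…,a_μ} be the vertices at distance ℓ+1 from the center (the outer boundary). Partition the indices according to the connected components of the annulus A = B minus T. If A₁,…,A_α are the parts of size > 1 and β is the total number of indices lying in parts of size > 1, then α ≤ ω, β ≤ 2ω, and every part has size at most ω + 1. -/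
/-!
Deleting the boundary edges `s(l i, a i)`, `i ∈ s`, leaves `B` connected as soon as every
`a i` with `i ∈ s` is joined inside the annulus to some `a j` with `j ∉ s`: the ball stays
connected through geodesics from the root, and `l i ⋯ l j — a j ⋯ a i` bypasses the deleted edge.
A connected graph has at least `|V| - 1` edges, so such an `s` has at most `ω` elements.
Each bound applies this to a suitable `s`: a class minus one of its elements, a set of
representatives of nontrivial classes, and the elements of nontrivial classes that are not
the chosen representative of their class.
-/

open Function SimpleGraph

namespace SimpleGraph

variable {V : Type*} {G H : SimpleGraph V}

theorem Reachable.of_forall_adj_reachable (h : ∀ ⦃u v⦄, G.Adj u v → H.Reachable u v)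
    {u v : V} (huv : G.Reachable u v) : H.Reachable u v :=
  Relation.reflTransGen_le_of_equivalence_of_le H.reachable_is_equivalence
    (fun _ _ hxy => h hxy) _ _ ((reachable_iff_reflTransGen u v).1 huv)

theorem Connected.deleteEdges_of_reachable (hG : G.Connected) {D : Set (Sym2 V)}
    (hD : ∀ ⦃u v⦄, G.Adj u v → s(u, v) ∈ D → (G.deleteEdges D).Reachable u v) :
    (G.deleteEdges D).Connected := by
  have := hG.nonempty
  refine .mk fun u v => (hG u v).of_forall_adj_reachable fun x y hxy => ?_
  by_cases hxyD : s(x, y) ∈ D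
  · exact hD hxy hxyD
  · exact (deleteEdges_adj.2 ⟨hxy, hxyD⟩).reachable

theorem ncard_add_card_le_of_connected_deleteEdges [Finite V] {D : Set (Sym2 V)}
    (hD : D ⊆ G.edgeSet) (h : (G.deleteEdges D).Connected) :
    D.ncard + Nat.card V ≤ G.edgeSet.ncard + 1 := by
  have hcard := h.card_vert_le_card_edgeSet_add_one
  rw [edgeSet_deleteEdges, Nat.card_coe_set_eq, Set.ncard_sdiff hD] at hcard
  have := Set.ncard_le_ncard hD
  omega

theorem Walk.dist_le_of_mem_support {u v x : V} (p : G.Walk u v) (hp : p.length = G.dist u v)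
    (hx : x ∈ p.support) : G.dist u x ≤ G.dist u v := by
  classical
  exact hp ▸ (dist_le (p.takeUntil x hx)).trans (p.length_takeUntil_le_length hx)

theorem Connected.induce_ball_preconnected (hG : G.Connected) (u : V) (ℓ : ℕ) :
    (G.induce {v | G.dist u v ≤ ℓ}).Preconnected := by
  suffices h : ∀ v (hv : G.dist u v ≤ ℓ),
      (G.induce {v | G.dist u v ≤ ℓ}).Reachable ⟨u, by simp⟩ ⟨v, hv⟩ from
    fun v w => (h v v.2).symm.trans (h w w.2)
  intro v hv
  obtain ⟨p, hp⟩ := hG.exists_walk_length_eq_dist u v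
  exact (p.induce _ fun x hx => (p.dist_le_of_mem_support hp hx).trans hv).reachable

theorem Reachable.deleteEdges_of_induce {S : Set V} {D : Set (Sym2 V)}
    (hD : ∀ x ∈ S, ∀ y ∈ S, s(x, y) ∉ D) {u v : S} (h : (G.induce S).Reachable u v) :
    (G.deleteEdges D).Reachable u v :=
  h.map ⟨Subtype.val, fun {x y} hxy => deleteEdges_adj.2 ⟨hxy, hD x x.2 y y.2⟩⟩

theorem Connected.connected_deleteEdges_image {ι : Type*} {S : Set V} (hG : G.Connected)
    (hS : (G.induce S).Preconnected) {l a : ι → V} (hl : ∀ i, l i ∈ S) (ha : ∀ i, a i ∉ S)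
    (hadj : ∀ i, G.Adj (l i) (a i)) (he : Injective fun i => s(l i, a i)) {s : Set ι}
    (hs : ∀ i ∈ s, ∃ j ∉ s, (G.induce Sᶜ).Reachable ⟨a i, ha i⟩ ⟨a j, ha j⟩) :
    (G.deleteEdges ((fun i => s(l i, a i)) '' s)).Connected := by
  set D := (fun i => s(l i, a i)) '' s
  have hD_mem : ∀ x y, s(x, y) ∈ D → ∃ i ∈ s, (x = l i ∧ y = a i) ∨ (x = a i ∧ y = l i) := by
    rintro x y ⟨i, hi, he⟩
    exact ⟨i, hi, by rw [Sym2.eq_iff] at he; tauto⟩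
  have hS_D : ∀ x ∈ S, ∀ y ∈ S, s(x, y) ∉ D := by
    intro x hx y hy hxy
    obtain ⟨i, -, ⟨-, rfl⟩ | ⟨rfl, -⟩⟩ := hD_mem x y hxy
    exacts [ha i hy, ha i hx]
  have hSc_D : ∀ x ∈ Sᶜ, ∀ y ∈ Sᶜ, s(x, y) ∉ D := by
    intro x hx y hy hxy
    obtain ⟨i, -, ⟨rfl, -⟩ | ⟨-, rfl⟩⟩ := hD_mem x y hxy
    exacts [hx (hl i), hy (hl i)]
  have hbypass : ∀ i ∈ s, (G.deleteEdges D).Reachable (l i) (a i) := by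
    intro i hi
    obtain ⟨j, hj, hij⟩ := hs i hi
    have hej : s(l j, a j) ∉ D := he.mem_set_image.not.2 hj
    exact ((hS ⟨l i, hl i⟩ ⟨l j, hl j⟩).deleteEdges_of_induce hS_D).trans <|
      (deleteEdges_adj.2 ⟨hadj j, hej⟩).reachable.trans (hij.symm.deleteEdges_of_induce hSc_D)
  refine hG.deleteEdges_of_reachable fun x y _ hxy => ?_
  obtain ⟨i, hi, ⟨rfl, rfl⟩ | ⟨rfl, rfl⟩⟩ := hD_mem x y hxy
  exacts [hbypass i hi, (hbypass i hi).symm]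

end SimpleGraph

section Fiber

variable {ι κ : Type*} {f : ι → κ} {ω : ℕ}

theorem ncard_fiber_le_succ [Fintype ι]
    (h : ∀ s : Finset ι, (∀ i ∈ s, ∃ j ∉ s, f i = f j) → s.card ≤ ω) (i : ι) :
    {j | f i = f j}.ncard ≤ ω + 1 := by
  classical
  set F := Finset.univ.filter fun j => f i = f j
  have hF : {j | f i = f j} = F := by simp [F]
  have hFi : (F.erase i).card ≤ ω := h _ fun j hj =>
    ⟨i, F.notMem_erase i, (Finset.mem_filter.1 (Finset.mem_of_mem_erase hj)).2.symm⟩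
  have := F.pred_card_le_card_erase (a := i)
  rw [hF, Set.ncard_coe_finset]
  omega

theorem card_le_of_injOn_of_nontrivial_fiber
    (h : ∀ s : Finset ι, (∀ i ∈ s, ∃ j ∉ s, f i = f j) → s.card ≤ ω) (s : Finset ι)
    (hs : ∀ i ∈ s, ∃ j, j ≠ i ∧ f i = f j) (hinj : ∀ i ∈ s, ∀ j ∈ s, i ≠ j → ¬ f i = f j) :
    s.card ≤ ω :=
  h s fun i hi =>
    let ⟨j, hji, hij⟩ := hs i hi
    ⟨j, fun hj => hinj i hi j hj hji.symm hij, hij⟩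

theorem ncard_mem_nontrivial_fiber_le [Fintype ι]
    (h : ∀ s : Finset ι, (∀ i ∈ s, ∃ j ∉ s, f i = f j) → s.card ≤ ω) :
    {i | ∃ j, j ≠ i ∧ f i = f j}.ncard ≤ 2 * ω := by
  classical
  rcases isEmpty_or_nonempty ι with hι | hι
  · simp
  set S := Finset.univ.filter fun i => ∃ j, j ≠ i ∧ f i = f j
  have hS : {i | ∃ j, j ≠ i ∧ f i = f j} = S := by simp [S]
  set rep : ι → ι := fun i => invFun f (f i)
  have hrep : ∀ i, f (rep i) = f i := fun i => invFun_eq ⟨i, rfl⟩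
  have hreps : (S.filter fun i => rep i = i).card ≤ ω := by
    refine card_le_of_injOn_of_nontrivial_fiber h _
      (fun i hi => (Finset.mem_filter.1 (Finset.mem_filter.1 hi).1).2) ?_
    intro i hi j hj hij hfij
    rw [Finset.mem_filter] at hi hj
    exact hij (hi.2.symm.trans ((congrArg (invFun f) hfij).trans hj.2))
  have hnonreps : (S.filter fun i => ¬ rep i = i).card ≤ ω := by
    refine h _ fun i _ => ⟨rep i, fun hmem => (Finset.mem_filter.1 hmem).2 ?_, (hrep i).symm⟩
    exact congrArg (invFun f) (hrep i)
  rw [hS, Set.ncard_coe_finset, ← S.card_filter_add_card_filter_not (fun i => rep i = i)]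
  omega

end Fiber

theorem annulus_component_clustering_general {V : Type*} [Fintype V] (B : SimpleGraph V)
    (ω ℓ μ : ℕ) (v₀ : V)
    (hconn : B.Connected)
    (hexc : (B.edgeSet.ncard : ℤ) ≤ (Fintype.card V : ℤ) - 1 + (ω : ℤ))
    (l a : Fin μ → V)
    (hl : ∀ i, B.dist v₀ (l i) ≤ ℓ)
    (ha : ∀ i, ¬ B.dist v₀ (a i) ≤ ℓ)
    (hadj : ∀ i, B.Adj (l i) (a i))
    (hdistinct : ∀ i j, i ≠ j → s(l i, a i) ≠ s(l j, a j)) :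
    -- every class has at most ω + 1 elements
    (∀ i : Fin μ,
      {j : Fin μ | (B.induce {v : V | ¬ B.dist v₀ v ≤ ℓ}).Reachable
          ⟨a i, ha i⟩ ⟨a j, ha j⟩}.ncard ≤ ω + 1) ∧
    -- β ≤ 2ω : at most 2ω indices lie in classes of size > 1
    ({i : Fin μ | ∃ j, j ≠ i ∧ (B.induce {v : V | ¬ B.dist v₀ v ≤ ℓ}).Reachable
          ⟨a i, ha i⟩ ⟨a j, ha j⟩}.ncard ≤ 2 * ω) ∧
    -- α ≤ ω : any system of representatives of distinct classes of size > 1 has ≤ ω elements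
    (∀ s : Finset (Fin μ),
      (∀ i ∈ s, ∃ j, j ≠ i ∧ (B.induce {v : V | ¬ B.dist v₀ v ≤ ℓ}).Reachable
          ⟨a i, ha i⟩ ⟨a j, ha j⟩) →
      (∀ i ∈ s, ∀ j ∈ s, i ≠ j → ¬ (B.induce {v : V | ¬ B.dist v₀ v ≤ ℓ}).Reachable
          ⟨a i, ha i⟩ ⟨a j, ha j⟩) →
      s.card ≤ ω) := by
  set c : Fin μ → (B.induce {v : V | ¬ B.dist v₀ v ≤ ℓ}).ConnectedComponent :=
    fun i => connectedComponentMk _ ⟨a i, ha i⟩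
  have he : Injective fun i => s(l i, a i) := fun i j hij =>
    by_contra fun hne => hdistinct i j hne hij
  have key : ∀ s : Finset (Fin μ), (∀ i ∈ s, ∃ j ∉ s, c i = c j) → s.card ≤ ω := by
    intro s hs
    have hdeleted_conn := hconn.connected_deleteEdges_image (hconn.induce_ball_preconnected v₀ ℓ) hl ha
      hadj he (s := s) fun i hi => (hs i hi).imp fun _ => .imp_right ConnectedComponent.eq.1
    have hcard := ncard_add_card_le_of_connected_deleteEdges
      (by rintro _ ⟨i, -, rfl⟩; exact hadj i) hdeleted_conn
    rw [Set.ncard_image_of_injective _ he, Set.ncard_coe_finset, Nat.card_eq_fintype_card]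
      at hcard
    omega
  simp only [← ConnectedComponent.eq]
  exact ⟨ncard_fiber_le_succ key, ncard_mem_nontrivial_fiber_le key,
    card_le_of_injOn_of_nontrivial_fiber key⟩

/-- Clustering of boundary vertices of a ball (Lemma on `α ≤ ω`, `β ≤ 2ω`, `|A_j| ≤ ω+1`):
let `B` be a finite connected graph with excess at most `ω`, rooted at `v₀`, let `T` be
the ball of radius `ℓ` around `v₀`, and let `e_i = {l_i, a_i}`, `i < μ`, enumerate the
distinct boundary edges of `T` (with `l_i ∈ T`, `a_i ∉ T`). Declare `i ∼ j` iff `a_i`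
and `a_j` lie in the same connected component of the annulus `A = B ∖ T` (the induced
graph on the complement of `T`). Then: every `∼`-class has at most `ω + 1` elements;
the number `β` of indices lying in classes of size `> 1` is at most `2ω`; and the
number `α` of classes of size `> 1` is at most `ω`. -/
theorem annulus_component_clustering {V : Type*} [Fintype V] (B : SimpleGraph V)
    (ω ℓ μ : ℕ) (v₀ : V)
    (hconn : B.Connected)
    (hexc : (B.edgeSet.ncard : ℤ) ≤ (Fintype.card V : ℤ) - 1 + (ω : ℤ))
    (l a : Fin μ → V)
    (hl : ∀ i, B.dist v₀ (l i) ≤ ℓ)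
    (ha : ∀ i, ¬ B.dist v₀ (a i) ≤ ℓ)
    (hadj : ∀ i, B.Adj (l i) (a i))
    (hdistinct : ∀ i j, i ≠ j → s(l i, a i) ≠ s(l j, a j))
    (hcover : ∀ u v : V, B.Adj u v → B.dist v₀ u ≤ ℓ → ¬ B.dist v₀ v ≤ ℓ →
      ∃ i, l i = u ∧ a i = v) :
    -- every class has at most ω + 1 elements
    (∀ i : Fin μ,
      {j : Fin μ | (B.induce {v : V | ¬ B.dist v₀ v ≤ ℓ}).Reachable
          ⟨a i, ha i⟩ ⟨a j, ha j⟩}.ncard ≤ ω + 1) ∧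
    -- β ≤ 2ω : at most 2ω indices lie in classes of size > 1
    ({i : Fin μ | ∃ j, j ≠ i ∧ (B.induce {v : V | ¬ B.dist v₀ v ≤ ℓ}).Reachable
          ⟨a i, ha i⟩ ⟨a j, ha j⟩}.ncard ≤ 2 * ω) ∧
    -- α ≤ ω : any system of representatives of distinct classes of size > 1 has ≤ ω elements
    (∀ s : Finset (Fin μ),
      (∀ i ∈ s, ∃ j, j ≠ i ∧ (B.induce {v : V | ¬ B.dist v₀ v ≤ ℓ}).Reachable
          ⟨a i, ha i⟩ ⟨a j, ha j⟩) →
      (∀ i ∈ s, ∀ j ∈ s, i ≠ j → ¬ (B.induce {v : V | ¬ B.dist v₀ v ≤ ℓ}).Reachable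
          ⟨a i, ha i⟩ ⟨a j, ha j⟩) →
      s.card ≤ ω) :=
  annulus_component_clustering_general B ω ℓ μ v₀ hconn hexc l a hl ha hadj hdistinct
end

section
/- Let G be a d-regular graph on N vertices whose ball of radius R around vertex 1 has excess at most ω, let T be the ball of radius ℓ ≪ R around vertex 1 with boundary vertices a₁,…,a_μ (endpoints outside T of boundary edges). Then after removing T, any vertex x outside T is within distance R/2 (in G with T removed) of at most ω + 1 of the boundary vertices a_p. -/
/-!
Suppose `x` were within distance `R / 2` in `G⁽ᵀ⁾` of `k ≥ ω + 2` of the vertices `a_p`. The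
vertices on geodesics of `G⁽ᵀ⁾` from `x` to these `a_p` form a connected set `W` outside `T`,
within distance `ℓ + 1 + R / 2 ≤ R` of `v₀`. Give every other vertex of the component of `v₀` in
the ball its predecessor on a geodesic to `v₀`: these parent edges, a spanning tree of `W` and the
`k` boundary edges `{l_p, a_p}` are all distinct, so this component has at least
`#vertices - 2 + k` edges. With Lean's `dist`, the vertices not reachable from `v₀` lie in the
ball; they span a `d`-regular graph with `d ≥ 2` (some `a_p` has two neighbours), hence one with at
least as many edges as vertices. So the excess of the ball is at least `k - 1 > ω`.
-/

open Finset

lemma Set.sym2_mono {α : Type*} {s t : Set α} (h : s ⊆ t) : s.sym2 ⊆ t.sym2 := fun _ he =>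
  Set.mem_sym2_iff_subset.mpr ((Set.mem_sym2_iff_subset.mp he).trans h)

namespace SimpleGraph

variable {V : Type*} {G : SimpleGraph V}

lemma Reachable.exists_adj_dist_add_one {u v : V} (h : G.Reachable u v) (hne : u ≠ v) :
    ∃ w, G.Adj v w ∧ G.dist u w + 1 = G.dist u v := by
  obtain ⟨p, hp⟩ := h.symm.exists_walk_length_eq_dist
  cases p with
  | nil => exact absurd rfl hne
  | @cons _ w _ hadj q =>
    have hq : G.dist u w ≤ q.length := dist_comm (G := G) ▸ dist_le q
    have htri : G.dist u v ≤ G.dist u w + G.dist w v :=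
      (h.trans hadj.reachable).dist_triangle_left v
    rw [dist_eq_one_iff_adj.mpr hadj.symm] at htri
    rw [Walk.length_cons, dist_comm] at hp
    exact ⟨w, hadj, by omega⟩

lemma reachable_of_not_dist_le {u v : V} {n : ℕ} (h : ¬ G.dist u v ≤ n) : G.Reachable u v :=
  Reachable.of_dist_ne_zero (by omega)

lemma Reachable.dist_map_le {W : Type*} {H : SimpleGraph W} (f : G →g H) {u v : V}
    (h : G.Reachable u v) : H.dist (f u) (f v) ≤ G.dist u v := by
  obtain ⟨p, hp⟩ := h.exists_walk_length_eq_dist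
  simpa [hp] using H.dist_le (p.map f)

lemma two_le_degree [Fintype V] [DecidableRel G.Adj] {v a b : V} (ha : G.Adj v a)
    (hb : G.Adj v b) (hab : a ≠ b) : 2 ≤ G.degree v := by
  classical
  rw [← card_neighborFinset_eq_degree, ← card_pair hab]
  exact card_le_card (by simp [insert_subset_iff, ha, hb])

lemma ncard_edgeSet_induce_inter_sym2 {s : Set V} (t : Set s) :
    ((G.induce s).edgeSet ∩ t.sym2).ncard = (G.edgeSet ∩ (Subtype.val '' t).sym2).ncard := by
  have hedge (e : Sym2 s) : e ∈ (G.induce s).edgeSet ↔ Sym2.map Subtype.val e ∈ G.edgeSet := by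
    induction e using Sym2.ind
    rfl
  rw [Set.sym2_image, ← Set.ncard_image_of_injective _ (Sym2.map.injective Subtype.val_injective)]
  congr 1
  ext e
  constructor
  · rintro ⟨e, ⟨he, het⟩, rfl⟩
    exact ⟨(hedge e).mp he, e, het, rfl⟩
  · rintro ⟨he, e, het, rfl⟩
    exact ⟨e, ⟨(hedge e).mpr he, het⟩, rfl⟩

lemma ncard_edgeSet_induce (s : Set V) :
    (G.induce s).edgeSet.ncard = (G.edgeSet ∩ s.sym2).ncard := by
  simpa using ncard_edgeSet_induce_inter_sym2 (G := G) (Set.univ : Set s)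

lemma ncard_edgeSet_inter_sym2_add_le [Finite V] {s t : Set V} (hst : Disjoint s t) :
    (G.edgeSet ∩ s.sym2).ncard + (G.edgeSet ∩ t.sym2).ncard ≤
      (G.edgeSet ∩ (s ∪ t).sym2).ncard := by
  have hdisj : Disjoint (G.edgeSet ∩ s.sym2) (G.edgeSet ∩ t.sym2) := by
    rw [Set.disjoint_left]
    rintro ⟨x, y⟩ ⟨-, hs⟩ ⟨-, ht⟩
    exact hst.notMem_of_mem_left hs.1 ht.1
  rw [← Set.ncard_union_eq hdisj]
  exact Set.ncard_le_ncard (Set.union_subset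
    (Set.inter_subset_inter_right _ (Set.sym2_mono Set.subset_union_left))
    (Set.inter_subset_inter_right _ (Set.sym2_mono Set.subset_union_right)))

lemma ncard_le_ncard_edgeSet_inter_sym2 [Fintype V] [DecidableRel G.Adj] {U : Set V}
    (hU : ∀ u ∈ U, G.neighborSet u ⊆ U) (hdeg : ∀ u ∈ U, 2 ≤ G.degree u) :
    U.ncard ≤ (G.edgeSet ∩ U.sym2).ncard := by
  classical
  have hsum : 2 * Fintype.card U ≤ 2 * #(G.induce U).edgeFinset := by
    rw [← sum_degrees_eq_twice_card_edges, mul_comm, ← smul_eq_mul, ← Finset.card_univ,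
      ← Finset.sum_const]
    refine Finset.sum_le_sum fun u _ => ?_
    rw [degree_induce_of_neighborSet_subset (hU u u.2)]
    exact hdeg u u.2
  rw [← ncard_edgeSet_induce, ← coe_edgeFinset, Set.ncard_coe_finset, Set.ncard_eq_toFinset_card',
    Set.toFinset_card]
  omega

/-- The parent edges are distinct, since a shared edge would make two vertices each other's
parent. -/
lemma ncard_diff_add_ncard_le_of_exists_parent [Finite V] {α : Type*} [Preorder α]
    {s r : Set V} {F : Set (Sym2 V)} (h : V → α) (hF : F ⊆ G.edgeSet ∩ s.sym2)
    (hpar : ∀ v ∈ s \ r, ∃ w ∈ s, G.Adj v w ∧ h w < h v ∧ s(v, w) ∉ F) :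
    (s \ r).ncard + F.ncard ≤ (G.edgeSet ∩ s.sym2).ncard := by
  choose! par hpar_mem hpar_adj hpar_lt hpar_F using hpar
  have hinj : Set.InjOn (fun v => s(v, par v)) (s \ r) := by
    intro u hu v hv huv
    rcases Sym2.eq_iff.mp huv with ⟨huv, -⟩ | ⟨hu', hv'⟩
    · exact huv
    · have h₁ := hpar_lt u hu
      have h₂ := hpar_lt v hv
      rw [hv'] at h₁
      rw [← hu'] at h₂
      exact absurd h₁ h₂.asymm
  have hdisj : Disjoint ((fun v => s(v, par v)) '' (s \ r)) F := by
    rw [Set.disjoint_left]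
    rintro _ ⟨v, hv, rfl⟩
    exact hpar_F v hv
  rw [← hinj.ncard_image, ← Set.ncard_union_eq hdisj]
  refine Set.ncard_le_ncard (Set.union_subset ?_ hF)
  rintro _ ⟨v, hv, rfl⟩
  exact ⟨hpar_adj v hv, hv.1, hpar_mem v hv⟩

/-- The vertices `v` with `d(x, v) + d(v, A) ≤ k`, i.e. those on some walk of length at most `k`
from `x` to `A`. The reachability conditions rule out the junk value `dist = 0` between different
components. -/
def ellipse (G : SimpleGraph V) (x : V) (A : Set V) (k : ℕ) : Set V :=
  {v | G.Reachable x v ∧ ∃ y ∈ A, G.Reachable v y ∧ G.dist x v + G.dist v y ≤ k}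

lemma mem_ellipse_of_mem {x y : V} {A : Set V} {k : ℕ} (hy : y ∈ A) (hxy : G.Reachable x y)
    (hk : G.dist x y ≤ k) : y ∈ G.ellipse x A k :=
  ⟨hxy, y, hy, .refl y, by simpa using hk⟩

lemma exists_adj_mem_ellipse {x v : V} {A : Set V} {k : ℕ} (hv : v ∈ G.ellipse x A k)
    (hne : x ≠ v) : ∃ w ∈ G.ellipse x A k, G.Adj v w ∧ G.dist x w + 1 = G.dist x v := by
  obtain ⟨hxv, y, hy, hvy, hk⟩ := hv
  obtain ⟨w, hvw, hw⟩ := hxv.exists_adj_dist_add_one hne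
  have hwy : G.dist w y ≤ G.dist w v + G.dist v y := hvw.symm.reachable.dist_triangle_left y
  rw [dist_eq_one_iff_adj.mpr hvw.symm] at hwy
  exact ⟨w, ⟨hxv.trans hvw.reachable, y, hy, hvw.symm.reachable.trans hvy, by omega⟩, hvw, hw⟩

lemma ncard_ellipse_le [Finite V] (x : V) (A : Set V) (k : ℕ) :
    (G.ellipse x A k).ncard ≤ (G.edgeSet ∩ (G.ellipse x A k).sym2).ncard + 1 := by
  have hpar := ncard_diff_add_ncard_le_of_exists_parent (s := G.ellipse x A k) (r := {x})
    (F := ∅) (G.dist x) (Set.empty_subset _) fun v ⟨hv, hvx⟩ => by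
      obtain ⟨w, hw, hvw, hdist⟩ := exists_adj_mem_ellipse hv (Ne.symm hvx)
      exact ⟨w, hw, hvw, by omega, id⟩
  have := Set.ncard_le_ncard_sdiff_add_ncard (G.ellipse x A k) {x}
  rw [Set.ncard_empty, Set.ncard_singleton] at *
  omega

lemma dist_le_of_mem_ellipse_induce {s : Set V} {u : V} {x v : s} {A : Set s} {k m : ℕ}
    (hA : ∀ y ∈ A, G.dist u y ≤ m) (hv : v ∈ (G.induce s).ellipse x A k) :
    G.dist u v ≤ m + k := by
  obtain ⟨-, y, hy, hvy, hk⟩ := hv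
  have hyv : G.dist y v ≤ (G.induce s).dist y v :=
    hvy.symm.dist_map_le (Embedding.induce s).toHom
  have htri : G.dist u v ≤ G.dist u y + G.dist y v :=
    (hvy.symm.map (Embedding.induce s).toHom).dist_triangle_right u
  have := hA y hy
  rw [dist_comm (u := y)] at hyv
  omega

end SimpleGraph

open SimpleGraph

section BallBoundary

variable {V : Type*} {G : SimpleGraph V} {v₀ : V} {ℓ : ℕ} {ι : Type*} {l a : ι → V}

lemma exists_two_le_degree [Fintype V] [DecidableRel G.Adj] (hl : ∀ i, G.dist v₀ (l i) ≤ ℓ)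
    (ha : ∀ i, ¬ G.dist v₀ (a i) ≤ ℓ) (hadj : ∀ i, G.Adj (l i) (a i))
    (hinj : Function.Injective fun i => s(l i, a i)) (x : {v | ¬ G.dist v₀ v ≤ ℓ}) {p q : ι}
    (hpq : p ≠ q) (hp : (G.induce {v | ¬ G.dist v₀ v ≤ ℓ}).Reachable x ⟨a p, ha p⟩)
    (hq : (G.induce {v | ¬ G.dist v₀ v ≤ ℓ}).Reachable x ⟨a q, ha q⟩) :
    ∃ v, 2 ≤ G.degree v := by
  by_cases hapq : a p = a q
  · refine ⟨a p, two_le_degree (hadj p).symm (hapq ▸ (hadj q).symm) fun hlpq => hpq ?_⟩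
    exact hinj (by simp only [hlpq, hapq])
  · obtain ⟨r, hr, hrx⟩ : ∃ r, (G.induce _).Reachable x ⟨a r, ha r⟩ ∧ x ≠ ⟨a r, ha r⟩ := by
      by_cases hxp : x = ⟨a p, ha p⟩
      · exact ⟨q, hq, fun hxq => hapq (congrArg Subtype.val (hxp.symm.trans hxq))⟩
      · exact ⟨p, hp, hxp⟩
    obtain ⟨z, hz, -⟩ := hr.exists_adj_dist_add_one hrx
    exact ⟨a r, two_le_degree hz (hadj r).symm fun h : (z : V) = l r => z.2 (h ▸ hl r)⟩

lemma image_ellipse_induce_subset {R : ℕ} (hlR : ℓ + 1 + R / 2 ≤ R)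
    (x : {v | ¬ G.dist v₀ v ≤ ℓ}) {A : Set {v | ¬ G.dist v₀ v ≤ ℓ}}
    (hA : ∀ y ∈ A, G.dist v₀ y ≤ ℓ + 1) :
    Subtype.val '' (G.induce {v | ¬ G.dist v₀ v ≤ ℓ}).ellipse x A (R / 2) ⊆
      {v | G.Reachable v₀ v ∧ G.dist v₀ v ≤ R} := by
  rintro _ ⟨v, hv, rfl⟩
  have := dist_le_of_mem_ellipse_induce hA hv
  exact ⟨reachable_of_not_dist_le v.2, by omega⟩

lemma exists_geodesic_parent_notMem {R : ℕ} {S : Set ι} {W : Set V}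
    (hl : ∀ i, G.dist v₀ (l i) ≤ ℓ) (ha : ∀ i, ¬ G.dist v₀ (a i) ≤ ℓ) (haW : ∀ p ∈ S, a p ∈ W)
    {v : V} (hv : v ∈ {v | G.Reachable v₀ v ∧ G.dist v₀ v ≤ R} \ insert v₀ W) :
    ∃ w ∈ {v | G.Reachable v₀ v ∧ G.dist v₀ v ≤ R}, G.Adj v w ∧ G.dist v₀ w < G.dist v₀ v ∧
      s(v, w) ∉ (fun p => s(l p, a p)) '' S ∪ (G.edgeSet ∩ W.sym2) := by
  obtain ⟨⟨hv₀v, hvR⟩, hv⟩ := hv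
  rw [Set.mem_insert_iff, not_or] at hv
  obtain ⟨w, hvw, hw⟩ := hv₀v.exists_adj_dist_add_one (Ne.symm hv.1)
  refine ⟨w, ⟨hv₀v.trans hvw.reachable, by omega⟩, hvw, by omega, ?_⟩
  rintro (⟨p, hp, hpvw⟩ | ⟨-, hvW, -⟩)
  · rcases Sym2.eq_iff.mp hpvw with ⟨rfl, rfl⟩ | ⟨-, rfl⟩
    · exact ha p (by have := hl p; omega)
    · exact hv.2 (haW p hp)
  · exact hv.2 hvW

lemma ncard_ball_add_ncard_le [Finite V] {R : ℕ} {S : Set ι} (hlR : ℓ + 1 + R / 2 ≤ R)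
    (hl : ∀ i, G.dist v₀ (l i) ≤ ℓ) (ha : ∀ i, ¬ G.dist v₀ (a i) ≤ ℓ)
    (hadj : ∀ i, G.Adj (l i) (a i)) (hinj : Function.Injective fun i => s(l i, a i))
    (x : {v | ¬ G.dist v₀ v ≤ ℓ})
    (hS : ∀ p ∈ S, (G.induce {v | ¬ G.dist v₀ v ≤ ℓ}).Reachable x ⟨a p, ha p⟩ ∧
      (G.induce {v | ¬ G.dist v₀ v ≤ ℓ}).dist x ⟨a p, ha p⟩ ≤ R / 2) :
    {v | G.Reachable v₀ v ∧ G.dist v₀ v ≤ R}.ncard + S.ncard ≤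
      (G.edgeSet ∩ {v | G.Reachable v₀ v ∧ G.dist v₀ v ≤ R}.sym2).ncard + 2 := by
  set Y := {v | G.Reachable v₀ v ∧ G.dist v₀ v ≤ R}
  set W : Set V := Subtype.val '' (G.induce {v | ¬ G.dist v₀ v ≤ ℓ}).ellipse x
    ((fun p => (⟨a p, ha p⟩ : {v | ¬ G.dist v₀ v ≤ ℓ})) '' S) (R / 2) with hW
  set F : Set (Sym2 V) := (fun p => s(l p, a p)) '' S
  have hWY : W ⊆ Y := image_ellipse_induce_subset hlR x <| by
    rintro _ ⟨p, -, rfl⟩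
    show G.dist v₀ (a p) ≤ ℓ + 1
    have := (hadj p).diff_dist_adj (u := v₀)
    have := hl p
    omega
  have haW : ∀ p ∈ S, a p ∈ W := fun p hp =>
    ⟨_, mem_ellipse_of_mem ⟨p, hp, rfl⟩ (hS p hp).1 (hS p hp).2, rfl⟩
  have hWcard : W.ncard ≤ (G.edgeSet ∩ W.sym2).ncard + 1 := by
    rw [hW, ← ncard_edgeSet_induce_inter_sym2, Set.ncard_image_of_injective _ Subtype.val_injective]
    exact ncard_ellipse_le _ _ _
  have hFW : Disjoint F (G.edgeSet ∩ W.sym2) := by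
    rw [Set.disjoint_left]
    rintro _ ⟨p, -, rfl⟩ ⟨-, ⟨v, -, hv⟩, -⟩
    exact v.2 (hv ▸ hl p)
  have hFY : F ∪ (G.edgeSet ∩ W.sym2) ⊆ G.edgeSet ∩ Y.sym2 := by
    refine Set.union_subset ?_ (Set.inter_subset_inter_right _ (Set.sym2_mono hWY))
    rintro _ ⟨p, hp, rfl⟩
    refine ⟨hadj p, Set.mk_mem_sym2_iff.mpr
      ⟨⟨(reachable_of_not_dist_le (ha p)).trans (hadj p).symm.reachable, ?_⟩, hWY (haW p hp)⟩⟩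
    have := hl p
    omega
  have key := ncard_diff_add_ncard_le_of_exists_parent (G.dist v₀) hFY fun v hv =>
    exists_geodesic_parent_notMem hl ha haW hv
  rw [Set.ncard_union_eq hFW, Set.ncard_image_of_injective S hinj] at key
  have := Set.ncard_le_ncard_sdiff_add_ncard Y (insert v₀ W)
  have := Set.ncard_insert_le v₀ W
  omega

end BallBoundary

theorem few_close_boundary_vertices_general {V : Type*} [Fintype V]
    (G : SimpleGraph V) [DecidableRel G.Adj]
    (d ω R ℓ μ : ℕ) (v₀ : V)
    (hreg : G.IsRegularOfDegree d)
    (hball : ((G.induce {v : V | G.dist v₀ v ≤ R}).edgeSet.ncard : ℤ)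
        - ({v : V | G.dist v₀ v ≤ R}.ncard : ℤ) + 1 ≤ (ω : ℤ))
    (hlR : ℓ + 1 + R / 2 ≤ R)
    (l a : Fin μ → V)
    (hl : ∀ i, G.dist v₀ (l i) ≤ ℓ)
    (ha : ∀ i, ¬ G.dist v₀ (a i) ≤ ℓ)
    (hadj : ∀ i, G.Adj (l i) (a i))
    (hdistinct : ∀ i j, i ≠ j → s(l i, a i) ≠ s(l j, a j)) :
    ∀ (x : V) (hx : ¬ G.dist v₀ x ≤ ℓ),
      {p : Fin μ |
        (G.induce {v : V | ¬ G.dist v₀ v ≤ ℓ}).Reachable ⟨x, hx⟩ ⟨a p, ha p⟩ ∧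
        (G.induce {v : V | ¬ G.dist v₀ v ≤ ℓ}).dist ⟨x, hx⟩ ⟨a p, ha p⟩ ≤ R / 2}.ncard
        ≤ ω + 1 := by
  intro x hx
  by_contra! hS
  set S := {p : Fin μ |
    (G.induce {v : V | ¬ G.dist v₀ v ≤ ℓ}).Reachable ⟨x, hx⟩ ⟨a p, ha p⟩ ∧
    (G.induce {v : V | ¬ G.dist v₀ v ≤ ℓ}).dist ⟨x, hx⟩ ⟨a p, ha p⟩ ≤ R / 2}
  have hinj : Function.Injective fun i => s(l i, a i) := fun i j h =>
    by_contra fun hij => hdistinct i j hij h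
  obtain ⟨p, q, hp, hq, hpq⟩ := (Set.one_lt_ncard_iff (s := S)).mp (by omega)
  obtain ⟨v, hv⟩ := exists_two_le_degree hl ha hadj hinj ⟨x, hx⟩ hpq hp.1 hq.1
  have hd : 2 ≤ d := hreg v ▸ hv
  have hYcount := ncard_ball_add_ncard_le (S := S) hlR hl ha hadj hinj ⟨x, hx⟩ fun _ hp => hp
  set Y := {v | G.Reachable v₀ v ∧ G.dist v₀ v ≤ R}
  set U := {v | ¬ G.Reachable v₀ v}
  have hYU : Disjoint Y U := Set.disjoint_left.mpr fun _ hv hu => hu hv.1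
  have hB : {v | G.dist v₀ v ≤ R} = Y ∪ U := by
    ext v
    by_cases hv : G.Reachable v₀ v <;> simp [Y, U, hv, dist_eq_zero_of_not_reachable]
  have hUcount : U.ncard ≤ (G.edgeSet ∩ U.sym2).ncard :=
    ncard_le_ncard_edgeSet_inter_sym2
      (fun u hu w huw hw => hu (hw.trans (G.adj_symm huw).reachable)) fun u _ => hreg u ▸ hd
  have hE := ncard_edgeSet_inter_sym2_add_le (G := G) hYU
  rw [ncard_edgeSet_induce, hB, Set.ncard_union_eq hYU] at hball
  omega

/-- Any vertex outside the ball `T` is close to few boundary vertices: let `G` be a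
finite simple `d`-regular graph whose ball of radius `R` around `v₀` has excess at most
`ω`, let `T` be the ball of radius `ℓ` (with `ℓ ≪ R`, encoded as `ℓ + 1 + R/2 ≤ R`),
and let `e_i = {l_i, a_i}`, `i < μ`, enumerate the distinct boundary edges of `T`.
Then any vertex `x ∉ T` is within distance `R/2` (in the graph `G⁽ᵀ⁾` obtained by
removing `T`) of at most `ω + 1` of the boundary vertices `a_p`. -/
theorem few_close_boundary_vertices {V : Type*} [Fintype V] [DecidableEq V]
    (G : SimpleGraph V) [DecidableRel G.Adj]
    (d ω R ℓ μ : ℕ) (v₀ : V)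
    (hreg : G.IsRegularOfDegree d)
    (hball : ((G.induce {v : V | G.dist v₀ v ≤ R}).edgeSet.ncard : ℤ)
        - ({v : V | G.dist v₀ v ≤ R}.ncard : ℤ) + 1 ≤ (ω : ℤ))
    (hlR : ℓ + 1 + R / 2 ≤ R)
    (l a : Fin μ → V)
    (hl : ∀ i, G.dist v₀ (l i) ≤ ℓ)
    (ha : ∀ i, ¬ G.dist v₀ (a i) ≤ ℓ)
    (hadj : ∀ i, G.Adj (l i) (a i))
    (hdistinct : ∀ i j, i ≠ j → s(l i, a i) ≠ s(l j, a j))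
    (hcover : ∀ u v : V, G.Adj u v → G.dist v₀ u ≤ ℓ → ¬ G.dist v₀ v ≤ ℓ →
      ∃ i, l i = u ∧ a i = v) :
    ∀ (x : V) (hx : ¬ G.dist v₀ x ≤ ℓ),
      {p : Fin μ |
        (G.induce {v : V | ¬ G.dist v₀ v ≤ ℓ}).Reachable ⟨x, hx⟩ ⟨a p, ha p⟩ ∧
        (G.induce {v : V | ¬ G.dist v₀ v ≤ ℓ}).dist ⟨x, hx⟩ ⟨a p, ha p⟩ ≤ R / 2}.ncard
        ≤ ω + 1 :=
  few_close_boundary_vertices_general G d ω R ℓ μ v₀ hreg hball hlR l a hl ha hadj hdistinct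
end

section
/- Let B be a finite connected graph of excess at most ω with vertex set containing a ball structure, and let U be a subset of k vertices of the inner ball. Removing U from B yields a graph B^(U) whose deficit function g(v) = (number of removed edges at v) satisfies: on every connected component of B^(U), the sum of g over the component is at most ω + k. -/
/-!
Let `S` be the component of `v` in `B⁽ᵁ⁾` and delete from `B` the edges between `S` and `U`;
there are exactly `∑_{x ∈ S} g(x)` of them. Every vertex stays reachable from `v` or from a vertex
of `U`: along a path of `B` from `v`, each deleted edge ends in `U` or in `S`, and `S` is reachable
from `v` without deleted edges. So the remaining graph has at most `k + 1` components, hence at least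
`|V| - k - 1` edges, and comparing with `|E(B)| ≤ |V| - 1 + ω` gives `∑_{x ∈ S} g(x) ≤ ω + k`.
-/

open BigOperators

/-- The graph obtained from `B` by deleting the vertices in `U` (kept as isolated
vertices; no edge touches `U`). -/
def SimpleGraph.deleteVertexSet {V : Type*} (B : SimpleGraph V) (U : Set V) :
    SimpleGraph V where
  Adj x y := B.Adj x y ∧ x ∉ U ∧ y ∉ U
  symm := by
    constructor
    intro x y h
    exact ⟨h.1.symm, h.2.2, h.2.1⟩
  loopless := by
    constructor
    intro x h
    exact B.irrefl h.1

open Finset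

namespace SimpleGraph

variable {V : Type*}

theorem card_le_ncard_edgeSet_add_ncard_of_forall_reachable [Finite V] (G : SimpleGraph V)
    (R : Set V) (h : ∀ x, ∃ r ∈ R, G.Reachable r x) :
    Nat.card V ≤ G.edgeSet.ncard + R.ncard := by
  rcases isEmpty_or_nonempty V with hV | hV
  · simp
  obtain ⟨r₀, hr₀, -⟩ := h hV.some
  -- a star from `r₀` to the rest of `R` connects the graph at the cost of `#R - 1` edges
  set star : Set (Sym2 V) := (fun r ↦ s(r₀, r)) '' (R \ {r₀})
  set H := G ⊔ fromEdgeSet star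
  have hH : H.Connected := by
    have hr₀_reach : ∀ x, H.Reachable r₀ x := fun x ↦ by
      obtain ⟨r, hr, hrx⟩ := h x
      refine Reachable.trans ?_ (hrx.mono le_sup_left)
      by_cases hrr₀ : r = r₀
      · rw [hrr₀]
      · exact Adj.reachable <| Or.inr <| (fromEdgeSet_adj _).2 ⟨⟨r, ⟨hr, hrr₀⟩, rfl⟩, Ne.symm hrr₀⟩
    exact ⟨fun x y ↦ (hr₀_reach x).symm.trans (hr₀_reach y)⟩
  calc Nat.card V ≤ H.edgeSet.ncard + 1 := hH.card_vert_le_card_edgeSet_add_one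
    _ ≤ G.edgeSet.ncard + star.ncard + 1 := by
        gcongr
        rw [edgeSet_sup, edgeSet_fromEdgeSet]
        exact (Set.ncard_union_le _ _).trans <| add_le_add_right
          (Set.ncard_le_ncard (s := star \ Sym2.diagSet) Set.sdiff_subset) _
    _ ≤ G.edgeSet.ncard + (R \ {r₀}).ncard + 1 := by gcongr; exact Set.ncard_image_le
    _ = G.edgeSet.ncard + R.ncard := by rw [add_assoc, Set.ncard_sdiff_singleton_add_one hr₀]

theorem Reachable.notMem_of_deleteVertexSet {B : SimpleGraph V} {U : Set V} {v w : V}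
    (h : (B.deleteVertexSet U).Reachable v w) (hv : v ∉ U) : w ∉ U := by
  obtain ⟨p⟩ := h
  by_cases hvw : v = w
  · exact hvw ▸ hv
  · exact (p.adj_penultimate (Walk.not_nil_of_ne hvw)).2.2

theorem deleteVertexSet_le_sdiff_between (B : SimpleGraph V) (S U : Set V) :
    B.deleteVertexSet U ≤ B \ B.between S U := by
  rintro a b ⟨hab, ha, hb⟩
  exact ⟨hab, fun h ↦ by rcases h.2 with ⟨-, hbU⟩ | ⟨haU, -⟩ <;> contradiction⟩

theorem Preconnected.exists_reachable_sdiff {G H : SimpleGraph V} (hG : G.Preconnected)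
    {R : Set V} (hR : R.Nonempty) (hH : ∀ x y, H.Adj x y → ∃ r ∈ R, (G \ H).Reachable r y)
    (x : V) : ∃ r ∈ R, (G \ H).Reachable r x := by
  obtain ⟨r₀, hr₀⟩ := hR
  induction (reachable_iff_reflTransGen r₀ x).1 (hG r₀ x) with
  | refl => exact ⟨r₀, hr₀, .rfl⟩
  | @tail b c _ hbc ih =>
    by_cases hHbc : H.Adj b c
    · exact hH b c hHbc
    · obtain ⟨r, hr, hrb⟩ := ih
      exact ⟨r, hr, hrb.trans (Adj.reachable ⟨hbc, hHbc⟩)⟩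

theorem ncard_edgeSet_between_eq_sum [Fintype V] (G : SimpleGraph V)
    [DecidableRel G.Adj] {s t : Finset V} (hst : Disjoint s t) :
    (G.between s t).edgeSet.ncard = ∑ x ∈ s, #{y ∈ t | G.Adj x y} := by
  classical
  rw [Set.ncard_eq_toFinset_card', ← edgeFinset, ← isBipartiteWith_sum_degrees_eq_card_edges
    (between_isBipartiteWith (disjoint_coe.2 hst))]
  refine sum_congr rfl fun x hx ↦ ?_
  rw [← card_neighborFinset_eq_degree]
  congr 1
  ext y
  simp [between_adj, hx, Finset.disjoint_left.1 hst hx, and_comm]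

end SimpleGraph

open SimpleGraph

theorem deficit_sum_bound_general {V : Type*} [Fintype V]
    (B : SimpleGraph V) [DecidableRel B.Adj] (ω : ℕ)
    (hconn : B.Connected)
    (hexc : (B.edgeSet.ncard : ℤ) ≤ (Fintype.card V : ℤ) - 1 + (ω : ℤ))
    (U : Finset V) (k : ℕ) (hk : U.card = k)
    (v : V) (hv : v ∉ U)
    (S : Set V)
    (hS : S = {w : V | (SimpleGraph.deleteVertexSet B (↑U : Set V)).Reachable v w}) :
    ∑ x ∈ (Set.toFinite S).toFinset, (U.filter (fun u => B.Adj x u)).card ≤ ω + k := by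
  set s := (Set.toFinite S).toFinset
  have hs : ∀ x ∈ s, (B.deleteVertexSet U).Reachable v x := by simp [s, hS]
  have hsU : Disjoint s U := disjoint_left.2 fun x hx ↦
    (hs x hx).notMem_of_deleteVertexSet (by simpa using hv)
  set H := B.between s U
  have hreach := hconn.preconnected.exists_reachable_sdiff (H := H) (R := insert v U)
    ⟨v, Set.mem_insert v _⟩ fun x y hxy ↦ by
      rcases hxy.2 with ⟨-, hy⟩ | ⟨-, hy⟩
      · exact ⟨y, Set.mem_insert_of_mem v hy, .rfl⟩
      · exact ⟨v, Set.mem_insert v _, (hs y hy).mono (B.deleteVertexSet_le_sdiff_between _ _)⟩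
  have hcard := card_le_ncard_edgeSet_add_ncard_of_forall_reachable _ _ hreach
  have hE : B.edgeSet.ncard = (B \ H).edgeSet.ncard + H.edgeSet.ncard := by
    rw [edgeSet_sdiff, Set.ncard_sdiff_add_ncard_of_subset (edgeSet_mono between_le)]
  rw [ncard_edgeSet_between_eq_sum B hsU] at hE
  rw [Nat.card_eq_fintype_card, Set.ncard_insert_of_notMem (by simpa using hv),
    Set.ncard_coe_finset, hk] at hcard
  omega

/-- Deficit sum bound: let `B` be a finite connected graph with excess at most `ω`
and `U` a set of `k` vertices. Removing `U` yields the graph `B⁽ᵁ⁾`, and the deficit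
`g(v)` of a remaining vertex `v` (the number of edges from `v` into `U`) satisfies:
on every connected component `S` of `B⁽ᵁ⁾` (the component of a vertex `v ∉ U`),
`∑_{x ∈ S} g(x) ≤ ω + k`. -/
theorem deficit_sum_bound {V : Type*} [Fintype V] [DecidableEq V]
    (B : SimpleGraph V) [DecidableRel B.Adj] (ω : ℕ)
    (hconn : B.Connected)
    (hexc : (B.edgeSet.ncard : ℤ) ≤ (Fintype.card V : ℤ) - 1 + (ω : ℤ))
    (U : Finset V) (k : ℕ) (hk : U.card = k)
    (v : V) (hv : v ∉ U)
    (S : Set V)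
    (hS : S = {w : V | (SimpleGraph.deleteVertexSet B (↑U : Set V)).Reachable v w}) :
    ∑ x ∈ (Set.toFinite S).toFinset, (U.filter (fun u => B.Adj x u)).card ≤ ω + k :=
  deficit_sum_bound_general B ω hconn hexc U k hk v hv S hS
end

section
/- If G is a graph and G̃ is a covering of G with covering map π (a graph homomorphism that is a local bijection on neighborhoods), and if for a vertex x of G̃ with π(x) = i the family (G̃_{xy})_y is absolutely summable over each fiber, then the Green's functions of the normalized adjacency operators satisfy G_{ij}(z) = Σ_{y : π(y)=j} G̃_{xy}(z) for all vertices j of G and z ∈ ℂ₊. -/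
/-!
For summable `f` on `W` write `π_* f l = ∑' y ∈ π ⁻¹' {l}, f y`. Because `π` maps each
neighbourhood of `G'` bijectively onto one of `G`, the neighbourhoods of the points over `j`
partition `π ⁻¹' (G.neighborSet j)`, so `A (π_* f) = π_* (A' f)` for the adjacency operators
`A`, `A'`. Applying `π_*` to the resolvent equation `(H' - z) Gt x = δ_x` gives
`(H - z) (π_* Gt x) = δ_{π x}`; since `H` is real symmetric and `z` is not real, `H - z` is
invertible and symmetric, so `π_* Gt x` is row `π x` of `(H - z)⁻¹`.
-/

open Matrix

section Fibers

variable {V W E : Type*} [NormedAddCommGroup E] (π : W → V) {f : W → E}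

theorem summable_of_summable_norm_fiber [CompleteSpace E] [Finite V]
    (hf : ∀ l, Summable fun y : π ⁻¹' {l} => ‖f y‖) : Summable f := by
  refine .of_norm <| (Equiv.sigmaFiberEquiv π).summable_iff.mp ?_
  exact (summable_sigma_of_nonneg fun _ => norm_nonneg _).mpr ⟨hf, .of_finite⟩

theorem sum_tsum_preimage_singleton [CompleteSpace E] (hf : Summable f) (s : Finset V) :
    ∑ l ∈ s, ∑' y : π ⁻¹' {l}, f y = ∑' y : π ⁻¹' ↑s, f y := by
  rw [← Finset.set_biUnion_preimage_singleton, ← Summable.tsum_finset_bUnion_disjoint]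
  · exact fun a _ b _ hab => Set.disjoint_singleton.mpr hab |>.preimage π
  · exact fun l _ => hf.subtype _

theorem tsum_preimage_singleton_ite [DecidableEq V] [DecidableEq W] (x : W) (a : E) (j : V) :
    ∑' y : π ⁻¹' {j}, (if x = y then a else 0) = (Pi.single (π x) a : V → E) j := by
  by_cases hx : π x = j
  · subst hx
    rw [Pi.single_eq_same]
    exact (tsum_eq_single ⟨x, rfl⟩ fun y hy => if_neg fun h => hy (Subtype.ext h.symm)).trans
      (if_pos rfl)
  · rw [Pi.single_eq_of_ne' hx]
    exact (tsum_congr fun y : π ⁻¹' {j} => if_neg fun (h : x = y) => hx (h ▸ y.2)).trans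
      tsum_zero

end Fibers

theorem SimpleGraph.adjMatrix_mulVec_tsum_preimage_singleton {V W : Type*} [Fintype V]
    (G : SimpleGraph V) [DecidableRel G.Adj] (π : W → V) {f : W → ℂ} (hf : Summable f)
    (j : V) :
    (G.adjMatrix ℂ *ᵥ fun l => ∑' y : π ⁻¹' {l}, f y) j =
      ∑' k : π ⁻¹' G.neighborSet j, f k := by
  rw [adjMatrix_mulVec_apply, sum_tsum_preimage_singleton π hf, coe_neighborFinset]

open scoped Matrix.Norms.L2Operator in
theorem Matrix.IsHermitian.isUnit_sub_smul_one {n : Type*} [Fintype n] [DecidableEq n]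
    {H : Matrix n n ℂ} (hH : H.IsHermitian) {z : ℂ} (hz : z.im ≠ 0) :
    IsUnit (H - z • 1) := by
  have : z ∉ spectrum ℂ H := fun h => hz (hH.isSelfAdjoint.im_eq_zero_of_mem_spectrum h)
  rw [spectrum.notMem_iff, Algebra.algebraMap_eq_smul_one] at this
  simpa using this.neg

theorem Matrix.IsSymm.inv_apply_eq_of_mulVec_eq_single {n α : Type*} [Fintype n] [DecidableEq n]
    [CommRing α] {M : Matrix n n α} (hM : M.IsSymm) (hU : IsUnit M) {v : n → α} {i : n}
    (hv : M *ᵥ v = Pi.single i 1) (j : n) : M⁻¹ i j = v j := by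
  have := hU.invertible
  rw [← hM.inv.apply, ← inv_mulVec_eq_vec hv.symm, mulVec_single_one]
  rfl

section Covering

variable {V W E : Type*} [NormedAddCommGroup E] {G : SimpleGraph V} {G' : SimpleGraph W}
  {π : W → V} (hcov : ∀ w, Set.BijOn π (G'.neighborSet w) (G.neighborSet (π w)))
include hcov

theorem injective_sigma_neighborSet_of_bijOn (j : V) :
    Function.Injective fun p : Σ y : π ⁻¹' {j}, G'.neighborSet y => (p.2 : W) := by
  rintro ⟨⟨y, hy⟩, ⟨k, hk⟩⟩ ⟨⟨y', hy'⟩, ⟨k', hk'⟩⟩ h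
  obtain rfl : k = k' := h
  obtain rfl : y = y' :=
    (hcov k).injOn (G'.adj_symm hk) (G'.adj_symm hk') (hy.trans hy'.symm)
  rfl

theorem range_sigma_neighborSet_of_bijOn (j : V) :
    Set.range (fun p : Σ y : π ⁻¹' {j}, G'.neighborSet y => (p.2 : W)) =
      π ⁻¹' G.neighborSet j := by
  ext k
  constructor
  · rintro ⟨⟨⟨y, rfl : π y = j⟩, ⟨k, hk⟩⟩, rfl⟩
    exact (hcov y).mapsTo hk
  · intro hk
    obtain ⟨y, hky, hy⟩ := (hcov k).surjOn (G.adj_symm hk)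
    exact ⟨⟨⟨y, hy⟩, ⟨k, G'.adj_symm hky⟩⟩, rfl⟩

theorem hasSum_preimage_singleton_sum_neighborFinset [CompleteSpace E]
    [∀ w, Fintype (G'.neighborSet w)] {f : W → E} (hf : Summable f) (j : V) :
    HasSum (fun y : π ⁻¹' {j} => ∑ k ∈ G'.neighborFinset y, f k)
      (∑' k : π ⁻¹' G.neighborSet j, f k) := by
  have hinj := injective_sigma_neighborSet_of_bijOn hcov j
  rw [← range_sigma_neighborSet_of_bijOn hcov j, tsum_range f hinj]
  refine (hf.comp_injective hinj).hasSum.sigma fun y => ?_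
  rw [SimpleGraph.neighborFinset, ← Finset.sum_set_coe]
  exact hasSum_fintype _

theorem smul_adjMatrix_sub_mulVec_tsum_preimage_singleton [Fintype V] [DecidableEq V]
    [DecidableRel G.Adj] [∀ w, Fintype (G'.neighborSet w)] {f : W → ℂ} (hf : Summable f)
    (c z : ℂ) (j : V) :
    ((c • G.adjMatrix ℂ - z • 1) *ᵥ fun l => ∑' y : π ⁻¹' {l}, f y) j =
      ∑' y : π ⁻¹' {j}, (c * ∑ k ∈ G'.neighborFinset y, f k - z * f y) := by
  rw [sub_mulVec, smul_mulVec, smul_mulVec, one_mulVec, Pi.sub_apply, Pi.smul_apply,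
    Pi.smul_apply, G.adjMatrix_mulVec_tsum_preimage_singleton π hf, smul_eq_mul, smul_eq_mul]
  exact (((hasSum_preimage_singleton_sum_neighborFinset hcov hf j).mul_left c).sub
    ((hf.subtype _).hasSum.mul_left z)).tsum_eq.symm

end Covering

theorem covering_green_function_general {V W : Type*} [Fintype V] [DecidableEq V]
    (G : SimpleGraph V) [DecidableRel G.Adj]
    (G' : SimpleGraph W) [∀ w, Fintype (G'.neighborSet w)] [DecidableEq W]
    (d : ℕ)
    (π : W → V)
    (hcov : ∀ w : W, Set.BijOn π (G'.neighborSet w) (G.neighborSet (π w)))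
    (z : ℂ) (hz : 0 < z.im)
    (Gf : Matrix V V ℂ)
    (hGf : Gf = (((Real.sqrt ((d : ℝ) - 1) : ℂ))⁻¹ • (G.adjMatrix ℂ)
        - z • (1 : Matrix V V ℂ))⁻¹)
    (Gt : W → W → ℂ)
    (hrec : ∀ x y : W,
      ((Real.sqrt ((d : ℝ) - 1) : ℂ))⁻¹ * (∑ k ∈ G'.neighborFinset y, Gt x k) - z * Gt x y
        = if x = y then 1 else 0)
    (hsum : ∀ (x : W) (j : V),
      Summable (fun y : {y : W // π y = j} => ‖Gt x (y : W)‖))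
    (x : W) (i : V) (hx : π x = i) :
    ∀ j : V, Gf i j = ∑' y : {y : W // π y = j}, Gt x (y : W) := by
  set c : ℂ := ((Real.sqrt ((d : ℝ) - 1) : ℂ))⁻¹
  have hc : IsSelfAdjoint c := by simp [c, isSelfAdjoint_iff, Complex.conj_ofReal]
  have hpush : (c • G.adjMatrix ℂ - z • 1) *ᵥ (fun l => ∑' y : π ⁻¹' {l}, Gt x y) =
      Pi.single i 1 := by
    ext j
    rw [smul_adjMatrix_sub_mulVec_tsum_preimage_singleton hcov
      (summable_of_summable_norm_fiber π (hsum x)), ← hx]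
    simp only [hrec, tsum_preimage_singleton_ite]
  have hunit := ((G.isHermitian_adjMatrix ℂ).smul hc).isUnit_sub_smul_one hz.ne'
  intro j
  rw [hGf]
  exact ((G.isSymm_adjMatrix.smul c).sub (isSymm_one.smul z)).inv_apply_eq_of_mulVec_eq_single
    hunit hpush j

/-- Green's function of a covering: let `π : W → V` be a surjective covering map from a
(possibly infinite, locally finite) graph `G'` onto a finite simple graph `G` with
degrees at most `d` (i.e. `π` maps each vertex neighborhood bijectively onto the image
neighborhood), let `Gf = (H - z)⁻¹` be the Green's function of the normalized adjacency
matrix `H = A/√(d-1)` of `G`, and let `Gt` be a Green's function of `G'`, i.e. a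
solution of the resolvent recursion whose rows are absolutely summable on every fiber
of `π`. Then for `x ∈ W` with `π x = i`, `Gf i j = ∑_{y : π y = j} Gt x y` for all `j`. -/
theorem covering_green_function {V W : Type*} [Fintype V] [DecidableEq V]
    (G : SimpleGraph V) [DecidableRel G.Adj]
    (G' : SimpleGraph W) [∀ w, Fintype (G'.neighborSet w)] [DecidableEq W]
    (d : ℕ) (hd : 2 ≤ d) (hdeg : ∀ v, G.degree v ≤ d)
    (π : W → V) (hsurj : Function.Surjective π)
    (hcov : ∀ w : W, Set.BijOn π (G'.neighborSet w) (G.neighborSet (π w)))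
    (z : ℂ) (hz : 0 < z.im)
    (Gf : Matrix V V ℂ)
    (hGf : Gf = (((Real.sqrt ((d : ℝ) - 1) : ℂ))⁻¹ • (G.adjMatrix ℂ)
        - z • (1 : Matrix V V ℂ))⁻¹)
    (Gt : W → W → ℂ)
    (hrec : ∀ x y : W,
      ((Real.sqrt ((d : ℝ) - 1) : ℂ))⁻¹ * (∑ k ∈ G'.neighborFinset y, Gt x k) - z * Gt x y
        = if x = y then 1 else 0)
    (hsum : ∀ (x : W) (j : V),
      Summable (fun y : {y : W // π y = j} => ‖Gt x (y : W)‖))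
    (x : W) (i : V) (hx : π x = i) :
    ∀ j : V, Gf i j = ∑' y : {y : W // π y = j}, Gt x (y : W) :=
  covering_green_function_general G G' d π hcov z hz Gf hGf Gt hrec hsum x i hx
end

section
/- For any 0 ≤ r ≤ 1 and θ ∈ [−π, π], the complex number 1 − e^{iθ}r satisfies (1−r)/2 + √r·|θ|/π ≤ |1 − e^{iθ}r| ≤ (1−r) + |θ|. -/
/-!
Writing `z = 1 - e^{iθ} r`, one has `‖z‖² = (1 - r)² + 2r(1 - cos θ)`. Jordan's inequality
`cos θ ≤ 1 - 2θ²/π²` on `[-π, π]` makes the second term at least `(2√r |θ|/π)²`, and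
`(a + b)/2 ≤ √(a² + b²)` gives the lower bound. The upper bound is the triangle inequality for
`z = (1 - r) - (e^{iθ} - 1) r` together with chord ≤ arc, `‖e^{iθ} - 1‖ ≤ |θ|`.
-/

open Complex

theorem norm_one_sub_exp_ofReal_mul_I_mul_sq (r θ : ℝ) :
    ‖1 - exp (θ * I) * r‖ ^ 2 = (1 - r) ^ 2 + 2 * r * (1 - Real.cos θ) := by
  rw [← normSq_eq_norm_sq, exp_mul_I, ← ofReal_cos, ← ofReal_sin, normSq_apply]
  simp only [sub_re, sub_im, mul_re, mul_im, add_re, add_im, ofReal_re, ofReal_im, I_re, I_im,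
    one_re, one_im]
  linear_combination r ^ 2 * Real.sin_sq_add_cos_sq θ

theorem norm_one_sub_exp_ofReal_mul_I_mul_le {r : ℝ} (hr0 : 0 ≤ r) (hr1 : r ≤ 1) (θ : ℝ) :
    ‖1 - exp (θ * I) * r‖ ≤ (1 - r) + |θ| := by
  have hchord : ‖exp (θ * I) - 1‖ ≤ |θ| := by
    rw [mul_comm]
    exact Real.norm_exp_I_mul_ofReal_sub_one_le
  calc ‖1 - exp (θ * I) * r‖ = ‖((1 - r : ℝ) : ℂ) - (exp (θ * I) - 1) * (r : ℝ)‖ := by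
        push_cast; ring_nf
    _ ≤ (1 - r) + |θ| * r := by
        grw [norm_sub_le, norm_mul, norm_real, norm_real, hchord, Real.norm_of_nonneg hr0,
          Real.norm_of_nonneg (sub_nonneg.2 hr1)]
    _ ≤ (1 - r) + |θ| := by nlinarith [abs_nonneg θ]

theorem add_div_two_le_of_sq_add_sq_le {a b c : ℝ} (hc : 0 ≤ c) (h : a ^ 2 + b ^ 2 ≤ c ^ 2) :
    (a + b) / 2 ≤ c :=
  abs_le_of_sq_le_sq' (by nlinarith [sq_nonneg (a - b)]) hc |>.2

theorem le_norm_one_sub_exp_ofReal_mul_I_mul {r θ : ℝ} (hr0 : 0 ≤ r) (hθ : |θ| ≤ Real.pi) :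
    (1 - r) / 2 + Real.sqrt r * |θ| / Real.pi ≤ ‖1 - exp (θ * I) * r‖ := by
  have hsq : (2 * Real.sqrt r * |θ| / Real.pi) ^ 2 = 2 * r * (2 / Real.pi ^ 2 * θ ^ 2) := by
    rw [div_pow, mul_pow, mul_pow, Real.sq_sqrt hr0, sq_abs]
    ring
  calc (1 - r) / 2 + Real.sqrt r * |θ| / Real.pi
      = ((1 - r) + 2 * Real.sqrt r * |θ| / Real.pi) / 2 := by ring
    _ ≤ ‖1 - exp (θ * I) * r‖ := by
        refine add_div_two_le_of_sq_add_sq_le (norm_nonneg _) ?_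
        rw [norm_one_sub_exp_ofReal_mul_I_mul_sq, hsq]
        have hJordan := Real.cos_le_one_sub_mul_cos_sq hθ
        gcongr
        linarith

/-- For `0 ≤ r ≤ 1` and `θ ∈ [−π, π]`,
`(1−r)/2 + √r·|θ|/π ≤ |1 − e^{iθ} r| ≤ (1−r) + |θ|`. -/
theorem one_sub_exp_mul_bounds (r θ : ℝ) (hr0 : 0 ≤ r) (hr1 : r ≤ 1)
    (hθl : -Real.pi ≤ θ) (hθu : θ ≤ Real.pi) :
    (1 - r) / 2 + Real.sqrt r * |θ| / Real.pi ≤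
        ‖1 - Complex.exp ((θ : ℂ) * Complex.I) * (r : ℂ)‖ ∧
      ‖1 - Complex.exp ((θ : ℂ) * Complex.I) * (r : ℂ)‖ ≤ (1 - r) + |θ| :=
  ⟨le_norm_one_sub_exp_ofReal_mul_I_mul hr0 (abs_le.2 ⟨hθl, hθu⟩),
    norm_one_sub_exp_ofReal_mul_I_mul_le hr0 hr1 θ⟩
end
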